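/- arXiv:2207.10301 — 3 statements merged into one kernel-verified Lean document; each statement's English description precedes it below -/
import Mathlib

section
/- Let p and s be integers with 1 ≤ s ≤ p/4. There exists a subset Ω of {0,1}^p such that every w in Ω has exactly s nonzero coordinates, every pair of distinct w, w' in Ω satisfies ‖w - w'‖₂² > s/2, and log |Ω| ≥ 0.233 · s · log(p/s). -/
/-!
Take a code `C ⊆ [m]^s`, `m = ⌊p/s⌋`, of minimum Hamming distance greater than `s/4` that is
maximal under inclusion. Hamming balls of radius `s/4` around its words then cover `[m]^s`, and
each has at most `(s choose s/4) m^(s/4)` points, which gives `|C| ≥ (3m)^(3s/4) / 4^s`. Writing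
the word `f` as the indicator of the `s` cells `(i, f i)` of an `s × m` grid inside `[p]` turns a
Hamming distance `d` into a squared Euclidean distance `2d > s/2`, and
`(3m)^(3/4) / 4 ≥ (5m/4)^0.233 ≥ (p/s)^0.233` once `m ≥ 4`.
-/

open Finset Fintype Real

section HammingCode

variable {ι β : Type*} [Fintype ι] [DecidableEq ι] [Fintype β] [DecidableEq β]

theorem card_filter_hammingDist_le (c : ι → β) {r : ℕ} (hr : r ≤ card ι) :
    #{x | hammingDist c x ≤ r} ≤ (card ι).choose r * card β ^ r := by
  let cube (B : Finset ι) : Finset (ι → β) := piFinset fun i => if i ∈ B then univ else {c i}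
  have hcube : ∀ B ∈ powersetCard r (univ : Finset ι), #(cube B) = card β ^ r := by
    intro B hB
    rw [mem_powersetCard] at hB
    simp only [cube, card_piFinset, apply_ite card, card_univ, card_singleton,
      Fintype.prod_ite_mem, prod_const, hB.2]
  calc #{x | hammingDist c x ≤ r}
      ≤ #((powersetCard r univ).biUnion cube) := by
        refine card_le_card fun x hx => ?_
        obtain ⟨B, hdiff, -, hB⟩ :=
          exists_subsuperset_card_eq (subset_univ {i | c i ≠ x i}) (mem_filter.1 hx).2
            (by simpa using hr)
        refine mem_biUnion.2 ⟨B, mem_powersetCard.2 ⟨subset_univ B, hB⟩, ?_⟩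
        simp only [cube, mem_piFinset]
        intro i
        split_ifs with hi
        · exact mem_univ _
        · exact mem_singleton.2 (not_not.1 fun h => hi (hdiff (by simpa using Ne.symm h)))
    _ ≤ ∑ B ∈ powersetCard r univ, #(cube B) := card_biUnion_le
    _ = (card ι).choose r * card β ^ r := by
        rw [sum_congr rfl hcube, sum_const, card_powersetCard, card_univ, smul_eq_mul]

theorem exists_hammingDist_packing_covering (r : ℕ) :
    ∃ C : Finset (ι → β), (∀ f ∈ C, ∀ g ∈ C, f ≠ g → r < hammingDist f g) ∧
      ∀ x, ∃ c ∈ C, hammingDist c x ≤ r := by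
  let codes := (univ : Finset (Finset (ι → β))).filter fun C =>
    ∀ f ∈ C, ∀ g ∈ C, f ≠ g → r < hammingDist f g
  obtain ⟨C, hC, hmax⟩ := exists_max_image codes card ⟨∅, by simp [codes]⟩
  have hpack := (mem_filter.1 hC).2
  refine ⟨C, hpack, fun x => ?_⟩
  by_contra! hfar
  have hx : x ∉ C := fun hx => by simpa using hfar x hx
  have hins : insert x C ∈ codes := by
    simp only [codes, mem_filter, mem_univ, true_and, mem_insert]
    rintro f (rfl | hf) g (rfl | hg) hfg
    · exact absurd rfl hfg
    · rw [hammingDist_comm]; exact hfar g hg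
    · exact hfar f hf
    · exact hpack f hf g hg hfg
  simpa [card_insert_of_notMem hx] using hmax _ hins

theorem gilbert_varshamov_exists_code {r : ℕ} (hr : r ≤ card ι) :
    ∃ C : Finset (ι → β), (∀ f ∈ C, ∀ g ∈ C, f ≠ g → r < hammingDist f g) ∧
      card β ^ card ι ≤ #C * ((card ι).choose r * card β ^ r) := by
  obtain ⟨C, hpack, hcover⟩ := exists_hammingDist_packing_covering (ι := ι) (β := β) r
  refine ⟨C, hpack, ?_⟩
  calc card β ^ card ι = #(univ : Finset (ι → β)) := by simp
    _ ≤ #(C.biUnion fun c => {x | hammingDist c x ≤ r}) := card_le_card fun x _ => by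
        obtain ⟨c, hc, hcx⟩ := hcover x
        exact mem_biUnion.2 ⟨c, hc, by simpa using hcx⟩
    _ ≤ ∑ c ∈ C, #{x | hammingDist c x ≤ r} := card_biUnion_le
    _ ≤ ∑ _c ∈ C, (card ι).choose r * card β ^ r :=
        sum_le_sum fun c _ => card_filter_hammingDist_le c hr
    _ = #C * ((card ι).choose r * card β ^ r) := by rw [sum_const, smul_eq_mul]

end HammingCode

section OneHot

variable {ι β κ : Type*} [DecidableEq β]

def oneHot (f : ι → β) (x : ι × β) : ℝ := if f x.1 = x.2 then 1 else 0

noncomputable def oneHotEmbed (e : ι × β ↪ κ) (f : ι → β) : EuclideanSpace ℝ κ :=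
  WithLp.toLp 2 (Function.extend e (oneHot f) 0)

theorem oneHotEmbed_apply_eq_zero_or_one (e : ι × β ↪ κ) (f : ι → β) (k : κ) :
    oneHotEmbed e f k = 0 ∨ oneHotEmbed e f k = 1 := by
  by_cases hk : ∃ x, e x = k
  · obtain ⟨x, rfl⟩ := hk
    simp only [oneHotEmbed, e.injective.extend_apply, oneHot]
    split_ifs <;> simp
  · simp [oneHotEmbed, Function.extend_apply' _ _ _ hk]

variable [Fintype ι] [Fintype β]

theorem card_oneHot_ne_zero (f : ι → β) : #{x | oneHot f x ≠ 0} = card ι := by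
  rw [card_filter, Fintype.sum_prod_type]
  simp [oneHot]

theorem sum_oneHot_sub_sq (f g : ι → β) :
    ∑ x, (oneHot f x - oneHot g x) ^ 2 = 2 * hammingDist f g := by
  have hblock : ∀ i, ∑ b, (oneHot f (i, b) - oneHot g (i, b)) ^ 2 =
      if f i = g i then 0 else 2 := by
    intro i
    by_cases h : f i = g i
    · simp [oneHot, h]
    · simp [oneHot, sub_sq, sum_add_distrib, ite_pow, h]
      norm_num
  rw [Fintype.sum_prod_type, sum_congr rfl fun i _ => hblock i, hammingDist, card_filter]
  push_cast
  rw [mul_sum]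
  refine sum_congr rfl fun i _ => ?_
  by_cases h : f i = g i <;> simp [h]

variable [Fintype κ]

theorem card_oneHotEmbed_ne_zero (e : ι × β ↪ κ) (f : ι → β) :
    #{k | oneHotEmbed e f k ≠ 0} = card ι := by
  rw [← card_oneHot_ne_zero f, card_filter, card_filter]
  refine (sum_of_injective e e.injective _ _ (fun k hk => ?_) fun x => ?_).symm
  · simp [oneHotEmbed, Function.extend_apply' _ _ _ hk]
  · simp [oneHotEmbed, e.injective.extend_apply]

theorem norm_oneHotEmbed_sub_sq (e : ι × β ↪ κ) (f g : ι → β) :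
    ‖oneHotEmbed e f - oneHotEmbed e g‖ ^ 2 = 2 * hammingDist f g := by
  rw [EuclideanSpace.real_norm_sq_eq, ← sum_oneHot_sub_sq]
  refine (sum_of_injective e e.injective _ _ (fun k hk => ?_) fun x => ?_).symm
  · simp [oneHotEmbed, Function.extend_apply' _ _ _ hk]
  · simp [oneHotEmbed, e.injective.extend_apply]

theorem oneHotEmbed_injective (e : ι × β ↪ κ) : Function.Injective (oneHotEmbed e) := by
  intro f g hfg
  have hnorm := norm_oneHotEmbed_sub_sq e f g
  rw [hfg, sub_self, norm_zero] at hnorm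
  exact hammingDist_eq_zero.1 (by exact_mod_cast (by linarith : (hammingDist f g : ℝ) = 0))

end OneHot

theorem Nat.choose_mul_pow_mul_pow_le_add_pow (n k a b : ℕ) :
    n.choose k * a ^ k * b ^ (n - k) ≤ (a + b) ^ n := by
  rcases le_or_gt k n with hk | hk
  · rw [add_pow]
    calc n.choose k * a ^ k * b ^ (n - k) = a ^ k * b ^ (n - k) * n.choose k := by ring
      _ ≤ _ := single_le_sum (f := fun j => a ^ j * b ^ (n - j) * n.choose j)
          (fun _ _ => Nat.zero_le _) (mem_range_succ_iff.2 hk)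
  · simp [Nat.choose_eq_zero_of_lt hk]

theorem three_mul_pow_sub_le_mul_four_pow {m s r c : ℕ} (hm : 0 < m)
    (hc : m ^ s ≤ c * (s.choose r * m ^ r)) (hr : r ≤ s) : (3 * m) ^ (s - r) ≤ c * 4 ^ s := by
  have hchoose := Nat.choose_mul_pow_mul_pow_le_add_pow s r 1 3
  rw [one_pow, mul_one] at hchoose
  refine Nat.le_of_mul_le_mul_left ?_ (pow_pos hm r)
  calc m ^ r * (3 * m) ^ (s - r) = 3 ^ (s - r) * m ^ s := by
        rw [mul_pow, ← pow_mul_pow_sub m hr]; ring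
    _ ≤ 3 ^ (s - r) * (c * (s.choose r * m ^ r)) := Nat.mul_le_mul_left _ hc
    _ = m ^ r * c * (s.choose r * 3 ^ (s - r)) := by ring
    _ ≤ m ^ r * c * 4 ^ s := Nat.mul_le_mul_left _ hchoose
    _ = m ^ r * (c * 4 ^ s) := by ring

theorem log_five_fourths_mul_add_log_four_le {y : ℝ} (hy : 4 ≤ y) :
    0.233 * log (5 / 4 * y) + log 4 ≤ 3 / 4 * log (3 * y) := by
  -- `0.233 < 1/4`, `5 * 4 ≤ 3 ^ 3`, and `log 4 ≤ log y` absorbs the remaining multiple of `log y`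
  have hconst : log 5 + log 4 ≤ 3 * log 3 := by
    have := log_le_log (by norm_num) (show (5 : ℝ) * 4 ≤ 3 ^ 3 by norm_num)
    rwa [log_mul (by norm_num) (by norm_num), log_pow] at this
  have h5 : 0 ≤ log 5 := log_nonneg (by norm_num)
  have hy4 : log 4 ≤ log y := log_le_log (by norm_num) hy
  rw [log_mul (by norm_num) (by positivity), log_mul (by norm_num) (by positivity),
    log_div (by norm_num) (by norm_num)]
  norm_num at hconst ⊢
  linarith

theorem log_add_one_le_log_of_three_mul_pow_le {m s r c : ℕ} (hm : 4 ≤ m) (hr : 4 * r ≤ s)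
    (hc : (3 * m) ^ (s - r) ≤ c * 4 ^ s) : 0.233 * s * log (m + 1) ≤ log c := by
  have hm' : (4 : ℝ) ≤ m := by exact_mod_cast hm
  have hc0 : 0 < c := Nat.pos_of_mul_pos_right ((pow_pos (by omega) _).trans_le hc)
  have hlog : (s - r : ℕ) * log (3 * m) ≤ log c + s * log 4 := by
    have := log_le_log (by positivity)
      (show ((3 * m) ^ (s - r) : ℝ) ≤ c * 4 ^ s by exact_mod_cast hc)
    rwa [log_mul (by positivity) (by positivity), log_pow, log_pow] at this
  have hsr : (3 / 4 * s : ℝ) ≤ (s - r : ℕ) := by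
    rw [Nat.cast_sub (by omega)]
    have : (4 * r : ℝ) ≤ s := by exact_mod_cast hr
    linarith
  have hm1 : log (m + 1) ≤ log (5 / 4 * m) := log_le_log (by positivity) (by linarith)
  have key := log_five_fourths_mul_add_log_four_le hm'
  have h3m : 0 ≤ log (3 * m) := log_nonneg (by linarith)
  have hs : (0 : ℝ) ≤ s := by positivity
  linarith [mul_le_mul_of_nonneg_right hsr h3m, mul_le_mul_of_nonneg_left hm1 hs,
    mul_le_mul_of_nonneg_left key hs]

/-- Varshamov–Gilbert bound: for integers `1 ≤ s ≤ p/4` there is a set `Ω` of binary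
vectors in `{0,1}^p`, each with exactly `s` nonzero coordinates, any two distinct
elements at squared Euclidean distance more than `s/2`, and `log |Ω| ≥ 0.233 s log(p/s)`. -/
theorem varshamov_gilbert (p s : ℕ) (hs : 1 ≤ s) (hsp : s ≤ p / 4) :
    ∃ Ω : Finset (EuclideanSpace ℝ (Fin p)),
      (∀ w ∈ Ω, (∀ i, w i = 0 ∨ w i = 1) ∧
        (Finset.univ.filter (fun i => w i ≠ 0)).card = s) ∧
      (∀ w ∈ Ω, ∀ w' ∈ Ω, w ≠ w' → (s : ℝ) / 2 < ‖w - w'‖ ^ 2) ∧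
      0.233 * s * Real.log ((p : ℝ) / s) ≤ Real.log Ω.card := by
  set m := p / s
  have hm : 4 ≤ m := (Nat.le_div_iff_mul_le hs).2 (by omega)
  have hsm : s * m ≤ p := Nat.mul_div_le p s
  let e : Fin s × Fin m ↪ Fin p := finProdFinEquiv.toEmbedding.trans (Fin.castLEEmb hsm)
  obtain ⟨C, hdist, hcount⟩ := gilbert_varshamov_exists_code (ι := Fin s) (β := Fin m)
    (r := s / 4) (by simpa using Nat.div_le_self s 4)
  simp only [Fintype.card_fin] at hcount
  refine ⟨C.map ⟨oneHotEmbed e, oneHotEmbed_injective e⟩, ?_, ?_, ?_⟩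
  · simp only [forall_mem_map, Function.Embedding.coeFn_mk]
    exact fun f _ =>
      ⟨oneHotEmbed_apply_eq_zero_or_one e f, by simpa using card_oneHotEmbed_ne_zero e f⟩
  · simp only [forall_mem_map, Function.Embedding.coeFn_mk, ne_eq,
      (oneHotEmbed_injective e).eq_iff, norm_oneHotEmbed_sub_sq]
    intro f hf g hg hfg
    have hsd : s < 4 * hammingDist f g := by have := hdist f hf g hg hfg; omega
    have : (s : ℝ) < 4 * hammingDist f g := by exact_mod_cast hsd
    linarith
  · have hps : log ((p : ℝ) / s) ≤ log (m + 1) :=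
      log_le_log (div_pos (by norm_cast; omega) (by norm_cast))
        (by simpa [m, Nat.floor_div_eq_div] using (Nat.lt_floor_add_one ((p : ℝ) / s)).le)
    have hlog := log_add_one_le_log_of_three_mul_pow_le hm (Nat.mul_div_le s 4)
      (three_mul_pow_sub_le_mul_four_pow (by omega) hcount (Nat.div_le_self s 4))
    rw [card_map]
    linarith [mul_le_mul_of_nonneg_left hps (by positivity : (0 : ℝ) ≤ 0.233 * s)]
end

section
/- Let λ > K + 1 ≥ 2. Then the upper incomplete gamma integral satisfies ∫_{λ}^{∞} u^{K−1} e^{−u} du < λ^K e^{−λ}. -/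
/-!
Integrating by parts, `∫_λ^∞ u^K e^{-u} du = λ^K e^{-λ} + K ∫_λ^∞ u^{K-1} e^{-u} du`.
On `(λ, ∞)` we have `u > λ > K + 1`, so the left side strictly exceeds
`(K + 1) ∫_λ^∞ u^{K-1} e^{-u} du`, and the bound follows.
-/

open Set MeasureTheory Filter Real Asymptotics

theorem hasDerivAt_pow_succ_mul_exp_neg (n : ℕ) (x : ℝ) :
    HasDerivAt (fun u => u ^ (n + 1) * exp (-u))
      ((n + 1) * (x ^ n * exp (-x)) - x ^ (n + 1) * exp (-x)) x := by
  refine ((hasDerivAt_pow (n + 1) x).mul (hasDerivAt_neg x).exp).congr_deriv ?_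
  push_cast
  ring

theorem integrableOn_Ioi_pow_mul_exp_neg (n : ℕ) (a : ℝ) :
    IntegrableOn (fun x => x ^ n * exp (-x)) (Ioi a) := by
  refine integrable_of_isBigO_exp_neg (b := 1 / 2) (by norm_num) (by fun_prop) ?_
  have hpow := (isLittleO_pow_exp_pos_mul_atTop n (b := 1 / 2) (by norm_num)).isBigO
  refine (hpow.mul (isBigO_refl (fun x : ℝ => exp (-x)) atTop)).congr_right fun x => ?_
  rw [← exp_add]
  ring_nf

theorem integral_Ioi_pow_succ_mul_exp_neg (n : ℕ) (a : ℝ) :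
    ∫ x in Ioi a, x ^ (n + 1) * exp (-x) =
      a ^ (n + 1) * exp (-a) + (n + 1) * ∫ x in Ioi a, x ^ n * exp (-x) := by
  have hint := integrableOn_Ioi_pow_mul_exp_neg
  have hftc := integral_Ioi_of_hasDerivAt_of_tendsto'
    (fun x _ => hasDerivAt_pow_succ_mul_exp_neg n x)
    (((hint n a).const_mul (n + 1)).sub (hint (n + 1) a))
    (tendsto_pow_mul_exp_neg_atTop_nhds_zero (n + 1))
  rw [integral_sub ((hint n a).const_mul _) (hint (n + 1) a), integral_const_mul] at hftc
  linarith

theorem setIntegral_lt_setIntegral_of_forall_lt {X : Type*} [MeasurableSpace X]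
    {μ : Measure X} {s : Set X} {f g : X → ℝ} (hs : MeasurableSet s) (hμs : μ s ≠ 0)
    (hf : IntegrableOn f s μ) (hg : IntegrableOn g s μ) (hlt : ∀ x ∈ s, f x < g x) :
    ∫ x in s, f x ∂μ < ∫ x in s, g x ∂μ := by
  have hpos : ∀ x ∈ s, 0 < (g - f) x := fun x hx => sub_pos.mpr (hlt x hx)
  rw [← sub_pos, ← integral_sub hg hf]
  refine (setIntegral_pos_iff_support_of_nonneg_ae ?_ (hg.sub hf)).mpr ?_
  · filter_upwards [ae_restrict_mem hs] with x hx
    exact (hpos x hx).le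
  · rw [inter_eq_right.mpr fun x hx => Function.mem_support.mpr (hpos x hx).ne']
    exact pos_iff_ne_zero.mpr hμs

/-- Natalini–Palumbo bound for the upper incomplete gamma function: for an integer
`K ≥ 1` and `λ > K + 1`, `∫_λ^∞ u^{K−1} e^{−u} du < λ^K e^{−λ}`. -/
theorem upper_incomplete_gamma_bound (K : ℕ) (hK : 1 ≤ K) (l : ℝ)
    (hl : (K : ℝ) + 1 < l) :
    (∫ u in Set.Ioi l, u ^ (K - 1) * Real.exp (-u)) < l ^ K * Real.exp (-l) := by
  obtain ⟨n, rfl⟩ := Nat.exists_eq_add_of_le' hK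
  push_cast at hl
  rw [Nat.add_sub_cancel]
  have hlt : (n + 2) * ∫ u in Ioi l, u ^ n * exp (-u) <
      ∫ u in Ioi l, u ^ (n + 1) * exp (-u) := by
    rw [← integral_const_mul]
    refine setIntegral_lt_setIntegral_of_forall_lt measurableSet_Ioi (by simp)
      ((integrableOn_Ioi_pow_mul_exp_neg n l).const_mul _)
      (integrableOn_Ioi_pow_mul_exp_neg (n + 1) l) fun u (hu : l < u) => ?_
    have hu₀ : 0 < u ^ n * exp (-u) := mul_pos (pow_pos (by linarith) n) (exp_pos _)
    calc (n + 2) * (u ^ n * exp (-u)) < u * (u ^ n * exp (-u)) := by gcongr; linarith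
      _ = u ^ (n + 1) * exp (-u) := by ring
  rw [integral_Ioi_pow_succ_mul_exp_neg] at hlt
  linarith
end

section
/- For any two matrices O₁, O₂ ∈ ℝ^{n×r} with orthonormal columns, the Frobenius sine-theta distance satisfies ‖sin Θ(O₁,O₂)‖_F ≤ inf_{V ∈ O(r)} ‖O₁ − O₂V‖_F ≤ √2 · ‖sin Θ(O₁,O₂)‖_F, where the infimum is over r×r orthogonal matrices V. -/
/-
For orthogonal `V`, `‖O₁ - O₂V‖_F² = 2r - 2 tr(AV)` with `A = O₁ᵀO₂`. The lower bound follows by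
summing `2 (AV)ⱼⱼ ≤ 1 + (AV)ⱼⱼ² ≤ 1 + ‖j-th column of AV‖²` over `j`, since `‖AV‖_F = ‖A‖_F`.
For the upper bound take `V` from a singular value decomposition of `A`, so that `tr(AV)` is the
sum of the singular values `σⱼ = √λⱼ(AᵀA)`; as `A` is a product of contractions, `σⱼ ≤ 1` and
hence `tr(AV) ≥ Σ σⱼ² = ‖A‖_F²`.
-/

open Finset Matrix

noncomputable def frobNorm' {m k : ℕ} (M : Matrix (Fin m) (Fin k) ℝ) : ℝ :=
  Real.sqrt (∑ i, ∑ j, M i j ^ 2)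

open scoped InnerProductSpace

open InnerProductSpace Module in
theorem inner_self_gramSchmidtOrthonormalBasis_of_orthogonal {ι E : Type*}
    [NormedAddCommGroup E] [InnerProductSpace ℝ E] [FiniteDimensional ℝ E] [Fintype ι]
    [LinearOrder ι] [LocallyFiniteOrderBot ι] (h : finrank ℝ E = Fintype.card ι) {f : ι → E}
    (hf : Pairwise fun i j => ⟪f i, f j⟫_ℝ = 0) (i : ι) :
    ⟪f i, gramSchmidtOrthonormalBasis h f i⟫_ℝ = ‖f i‖ := by
  by_cases hi : f i = 0
  · simp [hi]
  · rw [gramSchmidtOrthonormalBasis_apply_of_orthogonal h hf hi, real_inner_smul_right,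
      real_inner_self_eq_norm_sq, RCLike.ofReal_real_eq_id, id]
    field_simp

namespace Matrix

section

variable {m n : Type*} [Fintype m]

theorem isHermitian_transpose_mul_self (A : Matrix m n ℝ) : (Aᵀ * A).IsHermitian := by
  simpa only [conjTranspose_eq_transpose_of_trivial] using isHermitian_conjTranspose_mul_self A

variable [Fintype n]

theorem sum_sq_eq_trace_transpose_mul (M : Matrix m n ℝ) :
    ∑ i, ∑ j, M i j ^ 2 = trace (Mᵀ * M) := by
  simp only [trace, diag, mul_apply, transpose_apply, sq]
  exact Finset.sum_comm

theorem two_mul_trace_le_card_add_sum_sq (B : Matrix n n ℝ) :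
    2 * trace B ≤ Fintype.card n + ∑ i, ∑ j, B i j ^ 2 := by
  have hdiag : ∀ j, 2 * B j j ≤ 1 + ∑ i, B i j ^ 2 := fun j =>
    calc 2 * B j j ≤ 1 + B j j ^ 2 := by nlinarith [sq_nonneg (B j j - 1)]
      _ ≤ 1 + ∑ i, B i j ^ 2 := by
        gcongr; exact Finset.single_le_sum (fun i _ => sq_nonneg (B i j)) (mem_univ j)
  calc 2 * trace B = ∑ j, 2 * B j j := by rw [trace, mul_sum]; rfl
    _ ≤ ∑ j, (1 + ∑ i, B i j ^ 2) := sum_le_sum fun j _ => hdiag j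
    _ = Fintype.card n + ∑ i, ∑ j, B i j ^ 2 := by
      rw [sum_add_distrib, Finset.sum_comm]; simp

theorem mulVec_dotProduct_mulVec (A : Matrix m n ℝ) (x y : n → ℝ) :
    (A *ᵥ x) ⬝ᵥ (A *ᵥ y) = x ⬝ᵥ ((Aᵀ * A) *ᵥ y) := by
  rw [← mulVec_mulVec, dotProduct_mulVec x, vecMul_transpose]

variable [DecidableEq n]

theorem transpose_mul_self_mul_eq_one {O : Matrix m n ℝ} {V : Matrix n n ℝ} (hO : Oᵀ * O = 1)
    (hV : Vᵀ * V = 1) : (O * V)ᵀ * (O * V) = 1 := by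
  rw [transpose_mul, Matrix.mul_assoc, ← Matrix.mul_assoc Oᵀ, hO, Matrix.one_mul, hV]

theorem sum_sq_sub_of_transpose_mul_self_eq_one {M N : Matrix m n ℝ}
    (hM : Mᵀ * M = 1) (hN : Nᵀ * N = 1) :
    ∑ i, ∑ j, (M - N) i j ^ 2 = 2 * Fintype.card n - 2 * trace (Mᵀ * N) := by
  have hNM : trace (Nᵀ * M) = trace (Mᵀ * N) := by
    rw [← trace_transpose, transpose_mul, transpose_transpose]
  rw [sum_sq_eq_trace_transpose_mul, transpose_sub, Matrix.sub_mul, Matrix.mul_sub,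
    Matrix.mul_sub, trace_sub, trace_sub, trace_sub, hM, hN, hNM, trace_one]
  ring

theorem sum_sq_mul_of_transpose_mul_self_eq_one (A : Matrix m n ℝ) {V : Matrix n n ℝ}
    (hV : Vᵀ * V = 1) : ∑ i, ∑ j, (A * V) i j ^ 2 = ∑ i, ∑ j, A i j ^ 2 := by
  rw [sum_sq_eq_trace_transpose_mul, sum_sq_eq_trace_transpose_mul, transpose_mul,
    Matrix.mul_assoc, trace_mul_comm, Matrix.mul_assoc, Matrix.mul_assoc, mul_eq_one_comm.mp hV,
    Matrix.mul_one]

theorem card_sub_sum_sq_le_sum_sq_sub {O₁ O₂ : Matrix m n ℝ} (h₁ : O₁ᵀ * O₁ = 1)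
    (h₂ : O₂ᵀ * O₂ = 1) {V : Matrix n n ℝ} (hV : Vᵀ * V = 1) :
    Fintype.card n - ∑ i, ∑ j, (O₁ᵀ * O₂) i j ^ 2 ≤ ∑ i, ∑ j, (O₁ - O₂ * V) i j ^ 2 := by
  have htr := two_mul_trace_le_card_add_sum_sq (O₁ᵀ * O₂ * V)
  rw [sum_sq_mul_of_transpose_mul_self_eq_one _ hV, Matrix.mul_assoc] at htr
  rw [sum_sq_sub_of_transpose_mul_self_eq_one h₁ (transpose_mul_self_mul_eq_one h₂ hV)]
  linarith

theorem mulVec_dotProduct_mulVec_self_of_transpose_mul_self_eq_one {O : Matrix m n ℝ}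
    (hO : Oᵀ * O = 1) (x : n → ℝ) : (O *ᵥ x) ⬝ᵥ (O *ᵥ x) = x ⬝ᵥ x := by
  rw [mulVec_dotProduct_mulVec, hO, one_mulVec]

theorem transpose_mulVec_dotProduct_self_le {O : Matrix m n ℝ} (hO : Oᵀ * O = 1) (z : m → ℝ) :
    (Oᵀ *ᵥ z) ⬝ᵥ (Oᵀ *ᵥ z) ≤ z ⬝ᵥ z := by
  set y := Oᵀ *ᵥ z
  have hzy : z ⬝ᵥ (O *ᵥ y) = y ⬝ᵥ y := by rw [dotProduct_mulVec, ← mulVec_transpose]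
  have hsq : 0 ≤ (z - O *ᵥ y) ⬝ᵥ (z - O *ᵥ y) := sum_nonneg fun i _ => mul_self_nonneg _
  rw [sub_dotProduct, dotProduct_sub, dotProduct_sub, dotProduct_comm (O *ᵥ y) z, hzy,
    mulVec_dotProduct_mulVec_self_of_transpose_mul_self_eq_one hO] at hsq
  linarith

theorem sum_eigenvalues_transpose_mul_self (A : Matrix m n ℝ) :
    ∑ j, (isHermitian_transpose_mul_self A).eigenvalues j = ∑ i, ∑ j, A i j ^ 2 := by
  rw [sum_sq_eq_trace_transpose_mul, (isHermitian_transpose_mul_self A).trace_eq_sum_eigenvalues]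
  simp

theorem eigenvalues_transpose_mul_self_le_one {A : Matrix m n ℝ}
    (hA : ∀ x, (A *ᵥ x) ⬝ᵥ (A *ᵥ x) ≤ x ⬝ᵥ x) (j : n) :
    (isHermitian_transpose_mul_self A).eigenvalues j ≤ 1 := by
  set q := (isHermitian_transpose_mul_self A).eigenvectorBasis
  have hq : q j ⬝ᵥ q j = 1 := by
    have h := real_inner_self_eq_norm_sq (q j)
    rw [q.orthonormal.1 j, EuclideanSpace.inner_eq_star_dotProduct] at h
    simpa using h
  rw [(isHermitian_transpose_mul_self A).eigenvalues_eq, ← mulVec_dotProduct_mulVec]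
  simpa [hq] using hA (q j)

theorem exists_orthogonal_trace_mul_eq_sum_inner (A : Matrix n n ℝ)
    (p q : OrthonormalBasis n ℝ (EuclideanSpace ℝ n)) :
    ∃ V : Matrix n n ℝ, Vᵀ * V = 1 ∧
      trace (A * V) = ∑ j, ⟪WithLp.toLp 2 (A *ᵥ q j), p j⟫_ℝ := by
  set e := EuclideanSpace.basisFun n ℝ
  set Q := e.toBasis.toMatrix q
  set P := e.toBasis.toMatrix p
  have hQ : Qᵀ * Q = 1 := by
    simpa only [conjTranspose_eq_transpose_of_trivial] using
      e.toMatrix_orthonormalBasis_conjTranspose_mul_self q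
  have hP : P * Pᵀ = 1 := by
    simpa only [conjTranspose_eq_transpose_of_trivial] using
      e.toMatrix_orthonormalBasis_self_mul_conjTranspose p
  refine ⟨Q * Pᵀ, ?_, ?_⟩
  · rw [transpose_mul, transpose_transpose, Matrix.mul_assoc, ← Matrix.mul_assoc Qᵀ, hQ,
      Matrix.one_mul, hP]
  · rw [← Matrix.mul_assoc, trace_mul_comm]
    simp [trace, mul_apply, mulVec, dotProduct, EuclideanSpace.inner_eq_star_dotProduct, P, Q, e,
      Module.Basis.toMatrix_apply, Finset.mul_sum]

end

section

variable {m n : Type*} [Fintype m] [Fintype n] [LinearOrder n] [LocallyFiniteOrderBot n]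

open InnerProductSpace in
theorem exists_orthogonal_trace_mul_eq_sum_sqrt_eigenvalues (A : Matrix n n ℝ) :
    ∃ V : Matrix n n ℝ, Vᵀ * V = 1 ∧
      trace (A * V) = ∑ j, √((isHermitian_transpose_mul_self A).eigenvalues j) := by
  set hA := isHermitian_transpose_mul_self A
  set q := hA.eigenvectorBasis
  -- `A qⱼ` are orthogonal of length `σⱼ`; Gram–Schmidt normalizes them to the left singular basis.
  set w : n → EuclideanSpace ℝ n := fun j => WithLp.toLp 2 (A *ᵥ q j)
  have hinner : ∀ i j, ⟪w i, w j⟫_ℝ = hA.eigenvalues i * ⟪q i, q j⟫_ℝ := by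
    intro i j
    rw [EuclideanSpace.inner_toLp_toLp, star_trivial, mulVec_dotProduct_mulVec,
      hA.mulVec_eigenvectorBasis, dotProduct_smul, smul_eq_mul,
      EuclideanSpace.inner_eq_star_dotProduct, star_trivial]
  have hw : Pairwise fun i j => ⟪w i, w j⟫_ℝ = 0 := fun i j hij => by
    dsimp only
    rw [hinner, q.orthonormal.2 hij, mul_zero]
  have hnorm : ∀ j, ‖w j‖ = √(hA.eigenvalues j) := fun j => by
    rw [norm_eq_sqrt_real_inner, hinner, real_inner_self_eq_norm_sq, q.orthonormal.1 j]
    simp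
  obtain ⟨V, hV, htr⟩ := exists_orthogonal_trace_mul_eq_sum_inner A
    (gramSchmidtOrthonormalBasis finrank_euclideanSpace w) q
  refine ⟨V, hV, ?_⟩
  rw [htr]
  exact sum_congr rfl fun j _ =>
    (inner_self_gramSchmidtOrthonormalBasis_of_orthogonal _ hw j).trans (hnorm j)

theorem exists_orthogonal_sum_sq_le_trace_mul {A : Matrix n n ℝ}
    (hA : ∀ x, (A *ᵥ x) ⬝ᵥ (A *ᵥ x) ≤ x ⬝ᵥ x) :
    ∃ V : Matrix n n ℝ, Vᵀ * V = 1 ∧ ∑ i, ∑ j, A i j ^ 2 ≤ trace (A * V) := by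
  obtain ⟨V, hV, htr⟩ := exists_orthogonal_trace_mul_eq_sum_sqrt_eigenvalues A
  refine ⟨V, hV, ?_⟩
  rw [htr, ← sum_eigenvalues_transpose_mul_self]
  exact sum_le_sum fun j _ =>
    Real.le_sqrt_self_iff.mpr (eigenvalues_transpose_mul_self_le_one hA j)

theorem exists_orthogonal_sum_sq_sub_le {O₁ O₂ : Matrix m n ℝ}
    (h₁ : O₁ᵀ * O₁ = 1) (h₂ : O₂ᵀ * O₂ = 1) :
    ∃ V : Matrix n n ℝ, Vᵀ * V = 1 ∧
      ∑ i, ∑ j, (O₁ - O₂ * V) i j ^ 2 ≤ 2 * (Fintype.card n - ∑ i, ∑ j, (O₁ᵀ * O₂) i j ^ 2) := by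
  have hcontr : ∀ x, ((O₁ᵀ * O₂) *ᵥ x) ⬝ᵥ ((O₁ᵀ * O₂) *ᵥ x) ≤ x ⬝ᵥ x := fun x => by
    rw [← mulVec_mulVec, ← mulVec_dotProduct_mulVec_self_of_transpose_mul_self_eq_one h₂ x]
    exact transpose_mulVec_dotProduct_self_le h₁ _
  obtain ⟨V, hV, hle⟩ := exists_orthogonal_sum_sq_le_trace_mul hcontr
  refine ⟨V, hV, ?_⟩
  rw [sum_sq_sub_of_transpose_mul_self_eq_one h₁ (transpose_mul_self_mul_eq_one h₂ hV),
    ← Matrix.mul_assoc]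
  linarith

end

end Matrix

/-- Relation between the Frobenius sine-theta distance and the orthogonal Procrustes
distance: for `O₁, O₂ ∈ ℝ^{n×r}` with orthonormal columns,
`‖sin Θ(O₁,O₂)‖_F ≤ inf_{V ∈ O(r)} ‖O₁ − O₂V‖_F ≤ √2 ‖sin Θ(O₁,O₂)‖_F`, where
`‖sin Θ(O₁,O₂)‖_F² = r − ‖O₁ᵀO₂‖_F²`. -/
theorem sinTheta_procrustes (n r : ℕ)
    (O₁ O₂ : Matrix (Fin n) (Fin r) ℝ)
    (h₁ : O₁.transpose * O₁ = 1) (h₂ : O₂.transpose * O₂ = 1) :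
    Real.sqrt ((r : ℝ) - ∑ i, ∑ j, ((O₁.transpose * O₂) i j) ^ 2) ≤
        sInf {x : ℝ | ∃ V : Matrix (Fin r) (Fin r) ℝ,
          V.transpose * V = 1 ∧ x = frobNorm' (O₁ - O₂ * V)} ∧
      sInf {x : ℝ | ∃ V : Matrix (Fin r) (Fin r) ℝ,
          V.transpose * V = 1 ∧ x = frobNorm' (O₁ - O₂ * V)} ≤
        Real.sqrt 2 * Real.sqrt ((r : ℝ) - ∑ i, ∑ j, ((O₁.transpose * O₂) i j) ^ 2) := by
  set S := {x : ℝ | ∃ V : Matrix (Fin r) (Fin r) ℝ,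
    V.transpose * V = 1 ∧ x = frobNorm' (O₁ - O₂ * V)}
  have hS : S.Nonempty := ⟨_, 1, by simp, rfl⟩
  have hbdd : BddBelow S := ⟨0, by rintro x ⟨V, -, rfl⟩; exact Real.sqrt_nonneg _⟩
  constructor
  · refine le_csInf hS ?_
    rintro x ⟨V, hV, rfl⟩
    exact Real.sqrt_le_sqrt (by simpa using card_sub_sum_sq_le_sum_sq_sub h₁ h₂ hV)
  · obtain ⟨V, hV, hle⟩ := exists_orthogonal_sum_sq_sub_le h₁ h₂
    refine (csInf_le hbdd ⟨V, hV, rfl⟩).trans ?_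
    rw [← Real.sqrt_mul zero_le_two]
    exact Real.sqrt_le_sqrt (by simpa using hle)
end
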